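/- Let a : [0, r] → ℝ be a differentiable function with a(s) > 0 for s > 0, satisfying a'(s)/a(s) ≥ (2/s)·(sin(Cs)/sinh(Cs)) for all s ∈ (0, r], and liminf_{ε→0⁺} a(ε)/(πε²) ≥ 1. Then a(r) ≥ π r² · exp(φ(Cr)), where φ(s) = ∫₀ˢ (2/s')·(sin(s')/sinh(s') − 1) ds'. -/

import Mathlib

open MeasureTheory Real Filter

/-- The integrand of `φ`, extended continuously by `0` at `0`. -/
noncomputable def phiIntegrand (s : ℝ) : ℝ :=
  if s = 0 then 0 else (2 / s) * (Real.sin s / Real.sinh s - 1)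

/-- `φ(s) = ∫₀ˢ (2/s')(sin s'/sinh s' − 1) ds'`. -/
noncomputable def phi (s : ℝ) : ℝ := ∫ t in (0:ℝ)..s, phiIntegrand t

lemma measurable_phiIntegrand : Measurable phiIntegrand := by
  unfold phiIntegrand
  apply Measurable.ite (measurableSet_eq) measurable_const
  exact ((measurable_const.div measurable_id).mul
    ((Real.measurable_sin.div Real.measurable_sinh).sub measurable_const))

/-- key numeric bound: for 0 < t ≤ 1, sinh t - sin t ≤ t^3 -/
lemma sinh_sub_sin_le {t : ℝ} (ht : 0 < t) (ht1 : t ≤ 1) : Real.sinh t - Real.sin t ≤ t ^ 3 := by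
  have hsin : t - t ^ 3 / 4 < Real.sin t := by have := Real.sin_gt_sub_cube ht; nlinarith [pow_pos ht 3]
  have habs : |t| ≤ 1 := by rw [abs_of_pos ht]; exact ht1
  have h1 := Real.exp_bound habs (n := 3) (by norm_num)
  have habs' : |(-t)| ≤ 1 := by rwa [abs_neg]
  have h2 := Real.exp_bound habs' (n := 3) (by norm_num)
  rw [abs_neg] at h2
  rw [abs_of_pos ht] at h1 h2
  norm_num [Finset.sum_range_succ, Nat.factorial] at h1 h2
  have e1 : Real.exp t ≤ 1 + t + t^2/2 + t ^ 3 * (4 / 18) := by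
    have := abs_le.1 h1
    nlinarith [this.2]
  have e2 : 1 + (-t) + (-t)^2/2 - t^3 * (4/18) ≤ Real.exp (-t) := by
    have := abs_le.1 h2
    nlinarith [this.1]
  have hsinh : Real.sinh t ≤ t + t ^ 3 * (4/18) := by
    rw [Real.sinh_eq]
    nlinarith
  nlinarith

lemma phiIntegrand_nonpos {t : ℝ} (ht : 0 ≤ t) : phiIntegrand t ≤ 0 := by
  unfold phiIntegrand
  rcases eq_or_lt_of_le ht with h | h
  · simp [← h]
  · rw [if_neg h.ne']
    apply mul_nonpos_of_nonneg_of_nonpos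
    · positivity
    · rw [sub_nonpos, div_le_one (by simpa using h)]
      calc Real.sin t ≤ t := Real.sin_le h.le
        _ ≤ Real.sinh t := Real.self_le_sinh_iff.2 h.le

lemma phiIntegrand_abs_le {t : ℝ} (ht : 0 ≤ t) (ht1 : t ≤ 1) : |phiIntegrand t| ≤ 2 := by
  rcases eq_or_lt_of_le ht with h | h
  · simp [phiIntegrand, ← h]
  · have hsinh : t ≤ Real.sinh t := Real.self_le_sinh_iff.2 h.le
    have hsinh0 : 0 < Real.sinh t := lt_of_lt_of_le h hsinh
    have key := sinh_sub_sin_le h ht1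
    rw [abs_of_nonpos (phiIntegrand_nonpos ht)]
    unfold phiIntegrand
    rw [if_neg h.ne']
    have : -((2 / t) * (Real.sin t / Real.sinh t - 1)) = (2 / t) * ((Real.sinh t - Real.sin t) / Real.sinh t) := by
      field_simp
      ring
    rw [this]
    have h1 : (Real.sinh t - Real.sin t) / Real.sinh t ≤ t ^ 2 := by
      rw [div_le_iff₀ hsinh0]
      calc Real.sinh t - Real.sin t ≤ t ^ 3 := key
        _ = t ^ 2 * t := by ring
        _ ≤ t ^ 2 * Real.sinh t := by nlinarith
    calc (2 / t) * ((Real.sinh t - Real.sin t) / Real.sinh t) ≤ (2 / t) * t ^ 2 := by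
          apply mul_le_mul_of_nonneg_left h1 (by positivity)
      _ = 2 * t := by field_simp
      _ ≤ 2 := by nlinarith

lemma intervalIntegrable_phiIntegrand {x : ℝ} (hx0 : 0 ≤ x) (hx1 : x ≤ 1) :
    IntervalIntegrable phiIntegrand volume 0 x := by
  rw [intervalIntegrable_iff, Set.uIoc_of_le hx0]
  apply Measure.integrableOn_of_bounded (M := 2)
  · simp [measure_Ioc_lt_top.ne]
  · exact measurable_phiIntegrand.aestronglyMeasurable
  · filter_upwards [ae_restrict_mem measurableSet_Ioc] with t ht
    exact phiIntegrand_abs_le ht.1.le (ht.2.trans hx1)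

lemma phi_nonpos {x : ℝ} (hx0 : 0 ≤ x) (hx1 : x ≤ 1) : phi x ≤ 0 := by
  unfold phi
  rw [intervalIntegral.integral_of_le hx0]
  apply integral_nonpos_of_ae
  filter_upwards [ae_restrict_mem measurableSet_Ioc] with t ht
  exact phiIntegrand_nonpos ht.1.le

lemma continuousAt_phiIntegrand {x : ℝ} (hx : 0 < x) : ContinuousAt phiIntegrand x := by
  have h1 : ContinuousAt (fun s : ℝ => (2 / s) * (Real.sin s / Real.sinh s - 1)) x := by
    have hs : Real.sinh x ≠ 0 := by positivity
    exact (continuousAt_const.div continuousAt_id hx.ne').mul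
      ((Real.continuous_sin.continuousAt.div Real.continuous_sinh.continuousAt hs).sub
        continuousAt_const)
  apply h1.congr
  filter_upwards [eventually_ne_nhds hx.ne'] with t ht
  simp [phiIntegrand, ht]

lemma hasDerivAt_phi {x : ℝ} (hx : 0 < x) (hx1 : x ≤ 1) :
    HasDerivAt phi (phiIntegrand x) x := by
  apply intervalIntegral.integral_hasDerivAt_right
    (intervalIntegrable_phiIntegrand hx.le hx1)
    (measurable_phiIntegrand.stronglyMeasurable.stronglyMeasurableAtFilter)
    (continuousAt_phiIntegrand hx)

/-- A differential inequality `a'/a ≥ (2/s)·sin(Cs)/sinh(Cs)` together with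
`liminf_{ε→0⁺} a(ε)/(πε²) ≥ 1` forces `a(r) ≥ π r² exp(φ(Cr))`. -/
theorem monotonicity_area_bound (C r : ℝ) (hC : 0 < C) (hr : 0 < r) (hCr : C * r ≤ 1)
    (a : ℝ → ℝ) (ha : Differentiable ℝ a)
    (hpos : ∀ s, 0 < s → s ≤ r → 0 < a s)
    (hineq : ∀ s ∈ Set.Ioc (0:ℝ) r,
      deriv a s / a s ≥ (2 / s) * (Real.sin (C * s) / Real.sinh (C * s)))
    (hliminf : 1 ≤ Filter.liminf (fun ε => a ε / (Real.pi * ε ^ 2)) (nhdsWithin 0 (Set.Ioi 0))) :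
    a r ≥ Real.pi * r ^ 2 * Real.exp (phi (C * r)) := by
  set g : ℝ → ℝ := fun s => Real.log (a s) - 2 * Real.log s - phi (C * s) with hg
  -- derivative of g on (0, r]
  have hgderiv : ∀ s ∈ Set.Ioc (0:ℝ) r, HasDerivAt g
      (deriv a s / a s - 2 / s - C * phiIntegrand (C * s)) s := by
    rintro s ⟨hs0, hsr⟩
    have has : 0 < a s := hpos s hs0 hsr
    have h1 : HasDerivAt (fun t => Real.log (a t)) (deriv a s / a s) s := by
      have := (Real.hasDerivAt_log has.ne').comp s (ha s).hasDerivAt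
      simpa [div_eq_inv_mul, Function.comp_def] using this
    have h2 : HasDerivAt (fun t : ℝ => 2 * Real.log t) (2 * s⁻¹) s :=
      (Real.hasDerivAt_log hs0.ne').const_mul 2
    have hCs : 0 < C * s := mul_pos hC hs0
    have hCs1 : C * s ≤ 1 := le_trans (by nlinarith) hCr
    have h3 : HasDerivAt (fun t : ℝ => phi (C * t)) (C * phiIntegrand (C * s)) s := by
      have := (hasDerivAt_phi hCs hCs1).comp s ((hasDerivAt_id s).const_mul C)
      simpa [mul_comm, Function.comp_def] using this
    have := (h1.sub h2).sub h3
    rw [show (2:ℝ) / s = 2 * s⁻¹ from div_eq_mul_inv 2 s]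
    exact this
  -- the derivative is nonneg
  have hgderiv_nonneg : ∀ s ∈ Set.Ioc (0:ℝ) r,
      0 ≤ deriv a s / a s - 2 / s - C * phiIntegrand (C * s) := by
    rintro s ⟨hs0, hsr⟩
    have hCs : 0 < C * s := mul_pos hC hs0
    have key : 2 / s + C * phiIntegrand (C * s) = (2 / s) * (Real.sin (C * s) / Real.sinh (C * s)) := by
      unfold phiIntegrand
      rw [if_neg hCs.ne']
      field_simp
      ring
    have := hineq s ⟨hs0, hsr⟩
    linarith [key ▸ this]
  -- monotonicity: g ε ≤ g r for ε ∈ (0, r]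
  have hmono : ∀ ε ∈ Set.Ioc (0:ℝ) r, g ε ≤ g r := by
    rintro ε ⟨hε0, hεr⟩
    have hsub : Set.Icc ε r ⊆ Set.Ioc 0 r := fun x hx => ⟨lt_of_lt_of_le hε0 hx.1, hx.2⟩
    have hsub' : interior (Set.Icc ε r) ⊆ Set.Ioc 0 r := interior_subset.trans hsub
    have hcont : ContinuousOn g (Set.Icc ε r) := fun x hx =>
      ((hgderiv x (hsub hx)).continuousAt).continuousWithinAt
    have hdiff : DifferentiableOn ℝ g (interior (Set.Icc ε r)) := fun x hx =>
      ((hgderiv x (hsub' hx)).differentiableAt).differentiableWithinAt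
    have hd : ∀ x ∈ interior (Set.Icc ε r), 0 ≤ deriv g x := by
      intro x hx
      rw [(hgderiv x (hsub' hx)).deriv]
      exact hgderiv_nonneg x (hsub' hx)
    exact monotoneOn_of_deriv_nonneg (convex_Icc ε r) hcont hdiff hd
      (Set.left_mem_Icc.2 hεr) (Set.right_mem_Icc.2 hεr) hεr
  -- key bound: for ε ∈ (0, r], a ε / (π ε²) ≤ K
  have har : 0 < a r := hpos r hr le_rfl
  set K : ℝ := a r / (Real.pi * r ^ 2 * Real.exp (phi (C * r))) with hK
  have hbound : ∀ ε ∈ Set.Ioc (0:ℝ) r, a ε / (Real.pi * ε ^ 2) ≤ K := by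
    rintro ε ⟨hε0, hεr⟩
    have haε : 0 < a ε := hpos ε hε0 hεr
    have hφε : phi (C * ε) ≤ 0 :=
      phi_nonpos (by positivity) (le_trans (by nlinarith) hCr)
    have h1 : g ε ≤ g r := hmono ε ⟨hε0, hεr⟩
    have h2 : Real.log (a ε) - 2 * Real.log ε ≤
        Real.log (a r) - 2 * Real.log r - phi (C * r) := by
      simp only [hg] at h1
      linarith
    -- exponentiate
    have h3 : a ε / ε ^ 2 ≤ a r / r ^ 2 * Real.exp (- phi (C * r)) := by
      have e1 : a ε / ε ^ 2 = Real.exp (Real.log (a ε) - 2 * Real.log ε) := by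
        rw [Real.exp_sub, Real.exp_log haε]
        congr 1
        rw [show (2:ℝ) * Real.log ε = Real.log (ε ^ 2) by
          rw [Real.log_pow]; push_cast; ring]
        rw [Real.exp_log (by positivity)]
      have e2 : a r / r ^ 2 * Real.exp (- phi (C * r)) =
          Real.exp (Real.log (a r) - 2 * Real.log r - phi (C * r)) := by
        rw [Real.exp_sub, Real.exp_sub, Real.exp_log har]
        rw [show (2:ℝ) * Real.log r = Real.log (r ^ 2) by
          rw [Real.log_pow]; push_cast; ring]
        rw [Real.exp_log (by positivity), Real.exp_neg]
        ring
      rw [e1, e2]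
      exact Real.exp_le_exp.2 h2
    have hπ : (0:ℝ) < Real.pi := Real.pi_pos
    rw [hK]
    rw [div_le_div_iff₀ (by positivity) (by positivity)]
    have h4 : a ε / ε ^ 2 * (r ^ 2 * Real.exp (phi (C * r))) ≤
        a r / r ^ 2 * Real.exp (-phi (C * r)) * (r ^ 2 * Real.exp (phi (C * r))) := by
      apply mul_le_mul_of_nonneg_right h3 (by positivity)
    have h5 : a r / r ^ 2 * Real.exp (-phi (C * r)) * (r ^ 2 * Real.exp (phi (C * r))) = a r := by
      rw [Real.exp_neg]
      field_simp
    have h6 : a ε / ε ^ 2 * (r ^ 2 * Real.exp (phi (C * r))) ≤ a r := h5 ▸ h4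
    calc a ε * (Real.pi * r ^ 2 * Real.exp (phi (C * r)))
        = (a ε / ε ^ 2 * (r ^ 2 * Real.exp (phi (C * r)))) * (Real.pi * ε ^ 2) := by
          field_simp
      _ ≤ a r * (Real.pi * ε ^ 2) := by
          apply mul_le_mul_of_nonneg_right h6 (by positivity)
  -- liminf ≤ K
  have hev : ∀ᶠ ε in nhdsWithin (0:ℝ) (Set.Ioi 0), a ε / (Real.pi * ε ^ 2) ≤ K := by
    filter_upwards [Ioc_mem_nhdsGT_of_mem (Set.mem_Ico.2 ⟨le_refl (0:ℝ), hr⟩)] with ε hε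
    exact hbound ε hε
  have hevpos : ∀ᶠ ε in nhdsWithin (0:ℝ) (Set.Ioi 0), (0:ℝ) ≤ a ε / (Real.pi * ε ^ 2) := by
    filter_upwards [Ioc_mem_nhdsGT_of_mem (Set.mem_Ico.2 ⟨le_refl (0:ℝ), hr⟩)] with ε hε
    have := hpos ε hε.1 hε.2
    positivity
  have hbdd : IsBoundedUnder (· ≥ ·) (nhdsWithin (0:ℝ) (Set.Ioi 0))
      (fun ε => a ε / (Real.pi * ε ^ 2)) := ⟨0, by simpa using hevpos⟩
  have hliminf_le : Filter.liminf (fun ε => a ε / (Real.pi * ε ^ 2))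
      (nhdsWithin 0 (Set.Ioi 0)) ≤ K :=
    Filter.liminf_le_of_frequently_le hev.frequently hbdd
  have hKge : 1 ≤ K := le_trans hliminf hliminf_le
  rw [hK, le_div_iff₀ (by positivity)] at hKge
  linarith
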